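/- Let ν < 0 and η ∈ (0,1), and let l, u, l₀ be real numbers with l ≤ u, Φ(l) + 1 − Φ(u) = η, and Φ(l₀) = η. Then Φ(l − ν) + 1 − Φ(u − ν) ≤ Φ(l₀ − ν). Symmetrically, if ν > 0 and u₀ satisfies 1 − Φ(u₀) = η, then Φ(l − ν) + 1 − Φ(u − ν) ≤ 1 − Φ(u₀ − ν). -/
import Mathlib

open Set Real MeasureTheory ProbabilityTheory
open scoped ENNReal

/-- The standard normal cumulative distribution function. -/
noncomputable def Phi (x : ℝ) : ℝ :=
  ((ProbabilityTheory.gaussianReal 0 1) (Set.Iic x)).toReal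

lemma Phi_shift (ν c : ℝ) : Phi (c - ν) = ((gaussianReal ν 1) (Iic c)).toReal := by
  have h := gaussianReal_map_add_const (μ := 0) (v := 1) ν
  rw [zero_add] at h
  rw [← h, Measure.map_apply (measurable_add_const ν) measurableSet_Iic]
  unfold Phi
  congr 2
  ext x
  simp [sub_eq_add_neg, le_sub_iff_add_le]

lemma Phi_le_one (x : ℝ) : Phi x ≤ 1 := by
  unfold Phi
  have h : gaussianReal 0 1 (Iic x) ≤ 1 := prob_le_one
  simpa using ENNReal.toReal_mono ENNReal.one_ne_top h

lemma gauss_Ioc_ne_zero {a b : ℝ} (hab : a < b) (m : ℝ) :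
    gaussianReal m 1 (Ioc a b) ≠ 0 := by
  intro h0
  have hvol := gaussianReal_absolutelyContinuous' m one_ne_zero h0
  rw [Real.volume_Ioc, ENNReal.ofReal_eq_zero] at hvol
  linarith

lemma meas_Ioc (m : ℝ) {a b : ℝ} (hab : a ≤ b) :
    ((gaussianReal m 1) (Ioc a b)).toReal
      = ((gaussianReal m 1) (Iic b)).toReal - ((gaussianReal m 1) (Iic a)).toReal := by
  have hun : Iic a ∪ Ioc a b = Iic b := Iic_union_Ioc_eq_Iic hab
  have hdis : Disjoint (Iic a) (Ioc a b) := Iic_disjoint_Ioc le_rfl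
  have hadd := measure_union (μ := gaussianReal m 1) hdis measurableSet_Ioc
  rw [hun] at hadd
  rw [hadd, ENNReal.toReal_add (measure_ne_top _ _) (measure_ne_top _ _)]
  ring

lemma Phi_strictMono : StrictMono Phi := by
  intro a b hab
  have h1 := gauss_Ioc_ne_zero hab 0
  have hpos : 0 < ((gaussianReal 0 1) (Ioc a b)).toReal :=
    ENNReal.toReal_pos h1 (measure_ne_top _ _)
  have := meas_Ioc 0 hab.le
  unfold Phi
  linarith [this]

lemma meas_Ioi (m a : ℝ) :
    ((gaussianReal m 1) (Ioi a)).toReal = 1 - ((gaussianReal m 1) (Iic a)).toReal := by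
  rw [← Set.compl_Iic, prob_compl_eq_one_sub measurableSet_Iic,
    ENNReal.toReal_sub_of_le (prob_le_one) ENNReal.one_ne_top]
  simp

lemma core (ν c : ℝ) {A B : Set ℝ} (_hA : MeasurableSet A) (_hB : MeasurableSet B)
    (hAc : ∀ x ∈ A, ν * x ≤ ν * c) (hBc : ∀ x ∈ B, ν * c ≤ ν * x)
    (hmass : gaussianReal 0 1 A = gaussianReal 0 1 B) :
    gaussianReal ν 1 A ≤ gaussianReal ν 1 B := by
  have hpdf : ∀ x : ℝ, gaussianPDF ν 1 x
      = gaussianPDF 0 1 x * ENNReal.ofReal (rexp (ν * x - ν ^ 2 / 2)) := by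
    intro x
    rw [gaussianPDF, gaussianPDF, ← ENNReal.ofReal_mul (gaussianPDFReal_nonneg _ _ _)]
    congr 1
    simp only [gaussianPDFReal, NNReal.coe_one, mul_one, sub_zero]
    rw [mul_assoc, ← Real.exp_add]
    congr 2
    ring
  have hmeas : Measurable fun x : ℝ =>
      gaussianPDF 0 1 x * ENNReal.ofReal (rexp (ν * c - ν ^ 2 / 2)) :=
    (measurable_gaussianPDF 0 1).mul_const _
  calc gaussianReal ν 1 A = ∫⁻ x in A, gaussianPDF ν 1 x := gaussianReal_apply ν one_ne_zero A
    _ ≤ ∫⁻ x in A, gaussianPDF 0 1 x * ENNReal.ofReal (rexp (ν * c - ν ^ 2 / 2)) := by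
        refine setLIntegral_mono hmeas fun x hx => ?_
        rw [hpdf x]
        exact mul_le_mul_right (ENNReal.ofReal_le_ofReal
          (Real.exp_le_exp.mpr (by linarith [hAc x hx]))) _
    _ = gaussianReal 0 1 A * ENNReal.ofReal (rexp (ν * c - ν ^ 2 / 2)) := by
        rw [lintegral_mul_const _ (measurable_gaussianPDF 0 1),
          ← gaussianReal_apply 0 one_ne_zero A]
    _ = gaussianReal 0 1 B * ENNReal.ofReal (rexp (ν * c - ν ^ 2 / 2)) := by rw [hmass]
    _ = ∫⁻ x in B, gaussianPDF 0 1 x * ENNReal.ofReal (rexp (ν * c - ν ^ 2 / 2)) := by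
        rw [lintegral_mul_const _ (measurable_gaussianPDF 0 1),
          ← gaussianReal_apply 0 one_ne_zero B]
    _ ≤ ∫⁻ x in B, gaussianPDF ν 1 x := by
        refine setLIntegral_mono (measurable_gaussianPDF ν 1) fun x hx => ?_
        rw [hpdf x]
        exact mul_le_mul_right (ENNReal.ofReal_le_ofReal
          (Real.exp_le_exp.mpr (by linarith [hBc x hx]))) _
    _ = gaussianReal ν 1 B := (gaussianReal_apply ν one_ne_zero B).symm

lemma core_toReal (ν c : ℝ) {A B : Set ℝ} (hA : MeasurableSet A) (hB : MeasurableSet B)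
    (hAc : ∀ x ∈ A, ν * x ≤ ν * c) (hBc : ∀ x ∈ B, ν * c ≤ ν * x)
    (hmass : (gaussianReal 0 1 A).toReal = (gaussianReal 0 1 B).toReal) :
    (gaussianReal ν 1 A).toReal ≤ (gaussianReal ν 1 B).toReal := by
  have hm : gaussianReal 0 1 A = gaussianReal 0 1 B :=
    (ENNReal.toReal_eq_toReal_iff' (measure_ne_top _ _) (measure_ne_top _ _)).mp hmass
  exact ENNReal.toReal_mono (measure_ne_top _ _) (core ν c hA hB hAc hBc hm)

/-- Among all two-sided cutoffs `(l, u)` of size `η`, the one-sided test of the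
same size maximizes power against a mean shift `ν`: if `ν < 0` the lower one-sided test
dominates, and if `ν > 0` the upper one-sided test dominates. -/
theorem oneSided_dominates_twoSided (η : ℝ) (hη : η ∈ Ioo (0:ℝ) 1)
    (l u : ℝ) (hlu : l ≤ u) (hsize : Phi l + 1 - Phi u = η) :
    (∀ ν : ℝ, ν < 0 → ∀ l₀ : ℝ, Phi l₀ = η →
      Phi (l - ν) + 1 - Phi (u - ν) ≤ Phi (l₀ - ν)) ∧
    (∀ ν : ℝ, 0 < ν → ∀ u₀ : ℝ, 1 - Phi u₀ = η →
      Phi (l - ν) + 1 - Phi (u - ν) ≤ 1 - Phi (u₀ - ν)) := by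
  obtain ⟨hη0, hη1⟩ := hη
  have hPhi0 : ∀ x : ℝ, 0 ≤ Phi x := fun x => ENNReal.toReal_nonneg
  constructor
  · intro ν hν l₀ hl₀
    have hll₀ : l ≤ l₀ := by
      by_contra h
      push_neg at h
      have := Phi_strictMono h
      have := Phi_le_one u
      linarith
    rw [Phi_shift ν l, Phi_shift ν u, Phi_shift ν l₀]
    rcases le_or_gt l₀ u with hcase | hcase
    · have key := core_toReal ν l₀ (A := Ioi u) (B := Ioc l l₀) measurableSet_Ioi
        measurableSet_Ioc
        (fun x hx => by simp only [mem_Ioi] at hx; nlinarith)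
        (fun x hx => by simp only [mem_Ioc] at hx; nlinarith)
        (by rw [meas_Ioi 0 u, meas_Ioc 0 hll₀]
            show 1 - Phi u = Phi l₀ - Phi l
            linarith)
      rw [meas_Ioi ν u, meas_Ioc ν hll₀] at key
      linarith
    · have key := core_toReal ν u (A := Ioi l₀) (B := Ioc l u) measurableSet_Ioi
        measurableSet_Ioc
        (fun x hx => by simp only [mem_Ioi] at hx; nlinarith)
        (fun x hx => by simp only [mem_Ioc] at hx; nlinarith)
        (by rw [meas_Ioi 0 l₀, meas_Ioc 0 hlu]
            show 1 - Phi l₀ = Phi u - Phi l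
            linarith)
      rw [meas_Ioi ν l₀, meas_Ioc ν hlu] at key
      linarith
  · intro ν hν u₀ hu₀
    have hu₀u : u₀ ≤ u := by
      by_contra h
      push_neg at h
      have := Phi_strictMono h
      have := hPhi0 l
      linarith
    rw [Phi_shift ν l, Phi_shift ν u, Phi_shift ν u₀]
    rcases le_or_gt l u₀ with hcase | hcase
    · have key := core_toReal ν u₀ (A := Iic l) (B := Ioc u₀ u) measurableSet_Iic
        measurableSet_Ioc
        (fun x hx => by simp only [mem_Iic] at hx; nlinarith)
        (fun x hx => by simp only [mem_Ioc] at hx; nlinarith)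
        (by rw [meas_Ioc 0 hu₀u]
            show Phi l = Phi u - Phi u₀
            linarith)
      rw [meas_Ioc ν hu₀u] at key
      linarith
    · have key := core_toReal ν l (A := Iic u₀) (B := Ioc l u) measurableSet_Iic
        measurableSet_Ioc
        (fun x hx => by simp only [mem_Iic] at hx; nlinarith)
        (fun x hx => by simp only [mem_Ioc] at hx; nlinarith)
        (by rw [meas_Ioc 0 hlu]
            show Phi u₀ = Phi u - Phi l
            linarith)
      rw [meas_Ioc ν hlu] at key
      linarith
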